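/- arXiv:2602.22799 — 2 statements merged into one kernel-verified Lean document; each statement's English description precedes it below -/
import Mathlib

section
/- Let K ∈ ℕ and N ≥ 1. Let X₀, X₁, …, X_K : Ω → ℝ^S be mutually independent square-integrable random vectors and H₀, …, H_K be S×S real matrices. Suppose that for each κ ∈ {1, …, K} there is a measurable partition (A_{κ,s})_{s ∈ Fin N} of Ω with P(A_{κ,s}) = 1/N, and that the conditional moments are the same for every κ: N · ∫_{A_{κ,s}} X_κ dP = μ_s and N · ∫_{A_{κ,s}} (X_κ − μ_s)(X_κ − μ_s)ᵀ dP = C_s for all s ∈ Fin N. Set μ' := (1/N) Σ_s μ_s. Then Y := Σ_{κ=0}^{K} H_κ · X_κ satisfies E[Y] = H₀ · E[X₀] + Σ_{κ=1}^{K} H_κ · ((1/N) Σ_{s} μ_s) and Cov[Y] = H₀ · Cov[X₀] · H₀ᵀ + Σ_{κ=1}^{K} H_κ · ( (1/N) Σ_{s} ( (μ_s − μ')(μ_s − μ')ᵀ + C_s ) ) · H_κᵀ. (Paper's Proposition 3, eqs. (16a)–(16b): moments of ȳ[k] given the current symbol when the previously transmitted symbols are unknown and uniformly distributed.) -/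
open MeasureTheory ProbabilityTheory Matrix

/-- The mean of a random vector, taken componentwise. -/
noncomputable def vmean {Ω : Type*} [MeasurableSpace Ω] {d : ℕ}
    (P : Measure Ω) (X : Ω → Fin d → ℝ) : Fin d → ℝ :=
  fun i => ∫ ω, X ω i ∂P

/-- The covariance matrix of a random vector. -/
noncomputable def vcov {Ω : Type*} [MeasurableSpace Ω] {d : ℕ}
    (P : Measure Ω) (X : Ω → Fin d → ℝ) : Matrix (Fin d) (Fin d) ℝ :=
  Matrix.of fun i j => ∫ ω, (X ω i - vmean P X i) * (X ω j - vmean P X j) ∂P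

/-- The conditional mean of a random vector given an event `A` of probability `1/N`:
`μ_A := N • ∫_A X dP` (componentwise). -/
noncomputable def condMean {Ω : Type*} [MeasurableSpace Ω] {d : ℕ}
    (P : Measure Ω) (N : ℕ) (X : Ω → Fin d → ℝ) (A : Set Ω) : Fin d → ℝ :=
  fun i => (N : ℝ) * ∫ ω in A, X ω i ∂P

/-- The conditional covariance of a random vector given an event `A` of probability `1/N`:
`C_A := N • ∫_A (X − μ_A)(X − μ_A)ᵀ dP` (entrywise). -/
noncomputable def condCov {Ω : Type*} [MeasurableSpace Ω] {d : ℕ}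
    (P : Measure Ω) (N : ℕ) (X : Ω → Fin d → ℝ) (A : Set Ω) : Matrix (Fin d) (Fin d) ℝ :=
  Matrix.of fun i j =>
    (N : ℝ) * ∫ ω in A, (X ω i - condMean P N X A i) * (X ω j - condMean P N X A j) ∂P


/-! Independence kills the cross covariances, so `Y = Σ_κ H_κ X_κ` has mean `Σ_κ H_κ E[X_κ]` and
covariance `Σ_κ H_κ Cov[X_κ] H_κᵀ`. For `κ ≥ 1`, splitting the integrals over the cells of the
uniform partition gives `E[X_κ] = μ'`, and on each cell `A` the parallel-axis identity
`∫_A (X - c)(X - c)ᵀ = ∫_A (X - μ_A)(X - μ_A)ᵀ + P(A) (μ_A - c)(μ_A - c)ᵀ` with `c = μ'` turns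
`Cov[X_κ]` into `(1/N) Σ_s ((μ_s - μ')(μ_s - μ')ᵀ + C_s)` (law of total covariance). -/

section Moments

variable {Ω : Type*} [MeasurableSpace Ω] {P : Measure Ω} {m d : ℕ}

lemma vcov_apply (X : Ω → Fin d → ℝ) (i j : Fin d) :
    vcov P X i j = cov[fun ω => X ω i, fun ω => X ω j; P] := rfl

lemma memLp_mulVec_apply {p : ENNReal} {X : Ω → Fin d → ℝ}
    (hX : ∀ i, MemLp (fun ω => X ω i) p P) (H : Matrix (Fin m) (Fin d) ℝ) (i : Fin m) :
    MemLp (fun ω => (H *ᵥ X ω) i) p P := by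
  simpa only [mulVec, dotProduct] using
    memLp_finsetSum Finset.univ fun a _ => (hX a).const_mul (H i a)

lemma vmean_mulVec {X : Ω → Fin d → ℝ} (hX : ∀ i, Integrable (fun ω => X ω i) P)
    (H : Matrix (Fin m) (Fin d) ℝ) :
    vmean P (fun ω => H *ᵥ X ω) = H *ᵥ vmean P X := by
  funext i
  simp only [vmean, mulVec, dotProduct]
  rw [integral_finsetSum _ fun a _ => (hX a).const_mul _]
  simp only [integral_const_mul]

lemma vmean_sum {ι : Type*} [Fintype ι] {X : ι → Ω → Fin d → ℝ}
    (hX : ∀ κ i, Integrable (fun ω => X κ ω i) P) :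
    vmean P (fun ω => ∑ κ, X κ ω) = ∑ κ, vmean P (X κ) := by
  funext i
  simp only [vmean, Finset.sum_apply]
  exact integral_finsetSum _ fun κ _ => hX κ i

lemma vcov_mulVec [IsFiniteMeasure P] {X : Ω → Fin d → ℝ}
    (hX : ∀ i, MemLp (fun ω => X ω i) 2 P) (H : Matrix (Fin m) (Fin d) ℝ) :
    vcov P (fun ω => H *ᵥ X ω) = H * vcov P X * Hᵀ := by
  ext i j
  simp only [vcov_apply, mulVec, dotProduct]
  rw [covariance_fun_sum_fun_sum (fun a => (hX a).const_mul _) (fun b => (hX b).const_mul _)]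
  simp only [covariance_const_mul_left, covariance_const_mul_right, mul_apply, transpose_apply,
    vcov_apply, Finset.sum_mul]
  rw [Finset.sum_comm]
  exact Finset.sum_congr rfl fun a _ => Finset.sum_congr rfl fun b _ => by ring

lemma vcov_sum_of_iIndepFun [IsFiniteMeasure P] {ι : Type*} [Fintype ι]
    {X : ι → Ω → Fin d → ℝ}
    (hX : ∀ κ i, MemLp (fun ω => X κ ω i) 2 P) (hind : iIndepFun X P) :
    vcov P (fun ω => ∑ κ, X κ ω) = ∑ κ, vcov P (X κ) := by
  ext i j
  simp only [vcov_apply, Finset.sum_apply, Matrix.sum_apply]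
  rw [covariance_fun_sum_fun_sum (fun κ => hX κ i) (fun κ => hX κ j)]
  refine Finset.sum_congr rfl fun κ _ => Finset.sum_eq_single κ (fun l _ hl => ?_) (by simp)
  exact ((hind.indepFun hl.symm).comp (measurable_pi_apply i)
    (measurable_pi_apply j)).covariance_eq_zero (hX κ i) (hX l j)

lemma vmean_sum_mulVec {ι : Type*} [Fintype ι] {X : ι → Ω → Fin d → ℝ}
    (hX : ∀ κ i, Integrable (fun ω => X κ ω i) P) (H : ι → Matrix (Fin m) (Fin d) ℝ) :
    vmean P (fun ω => ∑ κ, H κ *ᵥ X κ ω) = ∑ κ, H κ *ᵥ vmean P (X κ) := by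
  rw [vmean_sum fun κ i => memLp_one_iff_integrable.mp <|
    memLp_mulVec_apply (fun a => memLp_one_iff_integrable.mpr (hX κ a)) (H κ) i]
  exact Finset.sum_congr rfl fun κ _ => vmean_mulVec (hX κ) (H κ)

lemma vcov_sum_mulVec_of_iIndepFun [IsFiniteMeasure P] {ι : Type*} [Fintype ι]
    {X : ι → Ω → Fin d → ℝ}
    (hX : ∀ κ i, MemLp (fun ω => X κ ω i) 2 P) (hind : iIndepFun X P)
    (H : ι → Matrix (Fin m) (Fin d) ℝ) :
    vcov P (fun ω => ∑ κ, H κ *ᵥ X κ ω) = ∑ κ, H κ * vcov P (X κ) * (H κ)ᵀ := by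
  have hHX : iIndepFun (fun κ ω => H κ *ᵥ X κ ω) P :=
    hind.comp _ fun κ => (continuous_const.matrix_mulVec continuous_id).measurable
  rw [vcov_sum_of_iIndepFun (fun κ => memLp_mulVec_apply (hX κ) (H κ)) hHX]
  exact Finset.sum_congr rfl fun κ _ => vcov_mulVec (hX κ) (H κ)

end Moments

section UniformPartition

variable {Ω : Type*} [MeasurableSpace Ω] {P : Measure Ω} {d N : ℕ}

lemma setIntegral_eq_inv_mul_condMean (hN : N ≠ 0) (X : Ω → Fin d → ℝ) (A : Set Ω)
    (i : Fin d) :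
    ∫ ω in A, X ω i ∂P = (N : ℝ)⁻¹ * condMean P N X A i := by
  rw [condMean, inv_mul_cancel_left₀ (Nat.cast_ne_zero.mpr hN)]

lemma setIntegral_eq_inv_mul_condCov (hN : N ≠ 0) (X : Ω → Fin d → ℝ) (A : Set Ω)
    (i j : Fin d) :
    ∫ ω in A, (X ω i - condMean P N X A i) * (X ω j - condMean P N X A j) ∂P =
      (N : ℝ)⁻¹ * condCov P N X A i j := by
  rw [condCov, of_apply, inv_mul_cancel_left₀ (Nat.cast_ne_zero.mpr hN)]

lemma setIntegral_sub_mul_sub_eq [IsFiniteMeasure P] {s : Set Ω} {f g : Ω → ℝ} {a b : ℝ}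
    (c e : ℝ) (hf : IntegrableOn f s P) (hg : IntegrableOn g s P)
    (hfg : IntegrableOn (fun ω => (f ω - a) * (g ω - b)) s P)
    (ha : ∫ ω in s, f ω ∂P = P.real s * a) (hb : ∫ ω in s, g ω ∂P = P.real s * b) :
    ∫ ω in s, (f ω - c) * (g ω - e) ∂P =
      ∫ ω in s, (f ω - a) * (g ω - b) ∂P + P.real s * ((a - c) * (b - e)) := by
  have hfa : ∫ ω in s, (f ω - a) ∂P = 0 := by
    rw [integral_sub hf (integrable_const a), setIntegral_const, ha, smul_eq_mul, sub_self]
  have hgb : ∫ ω in s, (g ω - b) ∂P = 0 := by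
    rw [integral_sub hg (integrable_const b), setIntegral_const, hb, smul_eq_mul, sub_self]
  have hfa' : IntegrableOn (fun ω => (b - e) * (f ω - a)) s P :=
    (hf.sub (integrable_const a)).const_mul _
  have hgb' : IntegrableOn (fun ω => (a - c) * (g ω - b) + (a - c) * (b - e)) s P :=
    ((hg.sub (integrable_const b)).const_mul _).add (integrable_const _)
  calc ∫ ω in s, (f ω - c) * (g ω - e) ∂P
      = ∫ ω in s, ((f ω - a) * (g ω - b) +
          ((b - e) * (f ω - a) + ((a - c) * (g ω - b) + (a - c) * (b - e)))) ∂P := by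
        congr 1; funext ω; ring
    _ = _ := by
        rw [integral_add hfg (by exact hfa'.add hgb'), integral_add hfa' hgb',
          integral_add (by exact (hg.sub (integrable_const b)).const_mul _) (integrable_const _),
          integral_const_mul, integral_const_mul, hfa, hgb, setIntegral_const, smul_eq_mul]
        ring

variable {ι : Type*} [Fintype ι] {A : ι → Set Ω}

lemma integral_eq_sum_setIntegral_of_partition (hmeas : ∀ s, MeasurableSet (A s))
    (hdisj : Pairwise (Function.onFun Disjoint A)) (hcover : ⋃ s, A s = Set.univ)
    {f : Ω → ℝ} (hf : Integrable f P) :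
    ∫ ω, f ω ∂P = ∑ s, ∫ ω in A s, f ω ∂P := by
  rw [← setIntegral_univ, ← hcover,
    integral_iUnion_fintype hmeas hdisj fun s => hf.integrableOn]

lemma vmean_eq_inv_smul_sum_condMean (hN : N ≠ 0) {X : Ω → Fin d → ℝ}
    (hX : ∀ i, Integrable (fun ω => X ω i) P) (hmeas : ∀ s, MeasurableSet (A s))
    (hdisj : Pairwise (Function.onFun Disjoint A)) (hcover : ⋃ s, A s = Set.univ) :
    vmean P X = (N : ℝ)⁻¹ • ∑ s, condMean P N X (A s) := by
  funext i
  rw [vmean, integral_eq_sum_setIntegral_of_partition hmeas hdisj hcover (hX i)]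
  simp only [setIntegral_eq_inv_mul_condMean hN, Pi.smul_apply, Finset.sum_apply, smul_eq_mul,
    Finset.mul_sum]

lemma vcov_eq_inv_smul_sum_condCov [IsFiniteMeasure P] (hN : N ≠ 0) {X : Ω → Fin d → ℝ}
    (hX : ∀ i, MemLp (fun ω => X ω i) 2 P) (hmeas : ∀ s, MeasurableSet (A s))
    (hdisj : Pairwise (Function.onFun Disjoint A)) (hcover : ⋃ s, A s = Set.univ)
    (hprob : ∀ s, P (A s) = (N : ENNReal)⁻¹) :
    vcov P X = (N : ℝ)⁻¹ • ∑ s,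
      (vecMulVec (condMean P N X (A s) - vmean P X) (condMean P N X (A s) - vmean P X) +
        condCov P N X (A s)) := by
  have hPA : ∀ s, P.real (A s) = (N : ℝ)⁻¹ := by simp [measureReal_def, hprob]
  have hint : ∀ i, Integrable (fun ω => X ω i) P := fun i => (hX i).integrable one_le_two
  have hprod : ∀ i j (a b : ℝ), Integrable (fun ω => (X ω i - a) * (X ω j - b)) P :=
    fun i j a b => ((hX i).sub (memLp_const a)).integrable_mul ((hX j).sub (memLp_const b))
  ext i j
  rw [vcov, of_apply, integral_eq_sum_setIntegral_of_partition hmeas hdisj hcover (hprod i j _ _)]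
  simp only [Matrix.smul_apply, Matrix.sum_apply, Finset.mul_sum, Matrix.add_apply,
    vecMulVec_apply, Pi.sub_apply, smul_eq_mul]
  refine Finset.sum_congr rfl fun s _ => ?_
  rw [setIntegral_sub_mul_sub_eq _ _ (hint i).integrableOn (hint j).integrableOn
    (hprod i j _ _).integrableOn (by rw [hPA, setIntegral_eq_inv_mul_condMean hN])
    (by rw [hPA, setIntegral_eq_inv_mul_condMean hN]), setIntegral_eq_inv_mul_condCov hN, hPA]
  ring

end UniformPartition

/-- Proposition 3, eqs. (16a)–(16b): moments of `Y = Σ_κ H_κ X_κ` given the current symbol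
(governing `X₀`) when the previous symbols (governing `X₁, …, X_K`) are unknown and uniformly
distributed: for each `κ ≥ 1` there is a measurable partition `(A_{κ,s})_s` with
`P(A_{κ,s}) = 1/N`, and the conditional moments of `X_κ` given `A_{κ,s}` equal `μ_s` and `C_s`
for every such `κ`. Then `E[Y] = H₀ E[X₀] + Σ_{κ≥1} H_κ ((1/N) Σ_s μ_s)` and
`Cov[Y] = H₀ Cov[X₀] H₀ᵀ + Σ_{κ≥1} H_κ ((1/N) Σ_s ((μ_s − μ')(μ_s − μ')ᵀ + C_s)) H_κᵀ`. -/
theorem moments_given_current_symbol_uniform_past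
    {Ω : Type*} [MeasurableSpace Ω] (P : Measure Ω) [IsProbabilityMeasure P]
    {S K N : ℕ} (hN : 1 ≤ N)
    (X : Fin (K + 1) → Ω → Fin S → ℝ)
    (hX2 : ∀ κ, ∀ i, MemLp (fun ω => X κ ω i) 2 P)
    (hXindep : iIndepFun X P)
    (H : Fin (K + 1) → Matrix (Fin S) (Fin S) ℝ)
    (A : Fin (K + 1) → Fin N → Set Ω)
    (hmeas : ∀ κ, κ ≠ 0 → ∀ s, MeasurableSet (A κ s))
    (hdisj : ∀ κ, κ ≠ 0 → Pairwise (Function.onFun Disjoint (A κ)))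
    (hcover : ∀ κ, κ ≠ 0 → (⋃ s, A κ s) = Set.univ)
    (hprob : ∀ κ, κ ≠ 0 → ∀ s, P (A κ s) = (N : ENNReal)⁻¹)
    (μ : Fin N → Fin S → ℝ) (C : Fin N → Matrix (Fin S) (Fin S) ℝ)
    (hcondMean : ∀ κ, κ ≠ 0 → ∀ s, condMean P N (X κ) (A κ s) = μ s)
    (hcondCov : ∀ κ, κ ≠ 0 → ∀ s, condCov P N (X κ) (A κ s) = C s) :
    vmean P (fun ω => ∑ κ, (H κ).mulVec (X κ ω)) =
        (H 0).mulVec (vmean P (X 0)) +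
          ∑ κ ∈ Finset.univ.erase 0, (H κ).mulVec ((N : ℝ)⁻¹ • ∑ s, μ s) ∧
      vcov P (fun ω => ∑ κ, (H κ).mulVec (X κ ω)) =
        H 0 * vcov P (X 0) * (H 0)ᵀ +
          ∑ κ ∈ Finset.univ.erase 0,
            H κ *
              ((N : ℝ)⁻¹ • ∑ s,
                (Matrix.vecMulVec (μ s - (N : ℝ)⁻¹ • ∑ t, μ t)
                    (μ s - (N : ℝ)⁻¹ • ∑ t, μ t) + C s)) *
              (H κ)ᵀ := by
  have hN0 : N ≠ 0 := Nat.one_le_iff_ne_zero.mp hN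
  have hint : ∀ κ i, Integrable (fun ω => X κ ω i) P :=
    fun κ i => (hX2 κ i).integrable one_le_two
  have hmean : ∀ κ, κ ≠ 0 → vmean P (X κ) = (N : ℝ)⁻¹ • ∑ s, μ s := fun κ hκ => by
    rw [vmean_eq_inv_smul_sum_condMean hN0 (hint κ) (hmeas κ hκ) (hdisj κ hκ) (hcover κ hκ)]
    simp only [hcondMean κ hκ]
  constructor
  · rw [vmean_sum_mulVec hint, ← Finset.add_sum_erase _ _ (Finset.mem_univ 0)]
    refine congrArg _ (Finset.sum_congr rfl fun κ hκ => ?_)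
    rw [hmean κ (Finset.ne_of_mem_erase hκ)]
  · rw [vcov_sum_mulVec_of_iIndepFun hX2 hXindep, ← Finset.add_sum_erase _ _ (Finset.mem_univ 0)]
    refine congrArg _ (Finset.sum_congr rfl fun κ hκ => ?_)
    have hκ0 := Finset.ne_of_mem_erase hκ
    rw [vcov_eq_inv_smul_sum_condCov hN0 (hX2 κ) (hmeas κ hκ0) (hdisj κ hκ0) (hcover κ hκ0)
      (hprob κ hκ0), hmean κ hκ0]
    simp only [hcondMean κ hκ0, hcondCov κ hκ0]
end

section
/- Let S ≥ 1, μ ∈ ℝ^S, let C be an S×S real matrix, and let L be an S×S real matrix satisfying L · Lᵀ = S • C (i.e., a square root of S·C such as its Cholesky factor). Define the 2S sigma points y_j := μ + L_j and y_{j+S} := μ − L_j for j = 1, …, S, where L_j is the j-th column of L. Then their empirical covariance about μ equals C: (1/(2S)) · Σ_{i=1}^{2S} (y_i − μ)(y_i − μ)ᵀ = C. (Paper's claim, following Julier–Uhlmann, that the sigma points used by the Unscented Transform match the covariance of the input random vector.) -/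
open Matrix

/-- The sigma points of the Unscented Transform match the prescribed covariance: if
`L Lᵀ = S • C`, then with `y_j := μ + L·e_j` and `y_{j+S} := μ − L·e_j` for
`j = 1, …, S`, the empirical covariance of the `2S` sigma points about `μ` equals `C`. -/
theorem sigma_points_match_covariance
    {S : ℕ} (hS : 1 ≤ S) (μ : Fin S → ℝ) (C L : Matrix (Fin S) (Fin S) ℝ)
    (hL : L * Lᵀ = (S : ℝ) • C) :
    (2 * (S : ℝ))⁻¹ •
        (∑ j : Fin S,
            Matrix.vecMulVec ((μ + L.mulVec (Pi.single j 1)) - μ)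
              ((μ + L.mulVec (Pi.single j 1)) - μ) +
          ∑ j : Fin S,
            Matrix.vecMulVec ((μ - L.mulVec (Pi.single j 1)) - μ)
              ((μ - L.mulVec (Pi.single j 1)) - μ)) = C := by
  have hS0 : (S : ℝ) ≠ 0 := by
    exact_mod_cast (Nat.pos_of_ne_zero (by omega)).ne'
  have hmv : ∀ j, L.mulVec (Pi.single j 1) = fun i => L i j := by
    intro j; ext a
    simp [Matrix.mulVec, dotProduct, Pi.single_apply]
  ext i k
  have h := congrFun (congrFun hL i) k
  simp only [Matrix.mul_apply, Matrix.transpose_apply, Matrix.smul_apply, smul_eq_mul] at h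
  simp only [hmv, add_sub_cancel_left, sub_sub_cancel_left, Matrix.smul_apply,
    Matrix.add_apply, Matrix.sum_apply, Matrix.vecMulVec_apply, Pi.neg_apply,
    neg_mul_neg, smul_eq_mul]
  field_simp
  linarith [h]
end
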